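/- Let w be a Galerkin solution. Then for every s ≥ −k₀, Im ∫₀^L w(s,x)·conj(∂_s w(s,x)) dx = ‖∂_x w(s,·)‖² − ‖w(s,·)‖_{L⁴}⁴ + Re ∫₀^L f(x)·conj(w(s,x)) dx − μ Im ∫₀^L v(s)(x)·conj(w(s,x)) dx. -/

import Mathlib

open MeasureTheory Finset

/-- The `L²` norm `(∫₀^L ‖g x‖² dx)^{1/2}` of a function on the circle `AddCircle L`
(recall that the standard measure on `AddCircle L` has total mass `L`). -/
noncomputable def l2norm (L : ℝ) [Fact (0 < L)] (g : AddCircle L → ℂ) : ℝ :=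
  Real.sqrt (∫ x : AddCircle L, ‖g x‖ ^ 2)

/-- The trigonometric polynomial `x ↦ ∑_{|k| ≤ N} c k · e^{2πikx/L}` on `AddCircle L`. -/
noncomputable def trigSum (L : ℝ) (N : ℕ) (c : ℤ → ℂ) : AddCircle L → ℂ :=
  fun x => ∑ k ∈ Finset.Icc (-(N : ℤ)) (N : ℤ), c k * fourier k x

/-- The low-mode Fourier projection `P_N g = ∑_{|k| ≤ N} ĝ(k) e^{2πikx/L}`. -/
noncomputable def lowProj (L : ℝ) [Fact (0 < L)] (N : ℕ) (g : AddCircle L → ℂ) :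
    AddCircle L → ℂ :=
  trigSum L N (fun k => fourierCoeff g k)

/-- A Galerkin solution of the feedback-controlled damped driven NLS:
`w(s,x) = ∑_{|k| ≤ n} a_k(s) e^{2πikx/L}` with differentiable coefficients on `[-k₀, ∞)`,
satisfying `i ∂ₛ w + ∂ₓ² w + P_n(|w|² w) + iγ w = P_n f - iμ (P_m w - v(s))`
with `w(-k₀, ·) = 0`, where the datum `v(s) = ∑_{|k| ≤ m} (vc k s) e^{2πikx/L}` is a
continuously differentiable map into trigonometric polynomials of degree ≤ m with
finite `X`-norm `sup_s ‖v(s)‖ + sup_s ‖∂ₛ v(s)‖`. -/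
structure GalerkinSolution (L : ℝ) [Fact (0 < L)] where
  /-- damping parameter -/
  γ : ℝ
  /-- feedback (relaxation) parameter -/
  μ : ℝ
  hγ : 0 < γ
  hμ : 0 < μ
  /-- number of observed low modes -/
  m : ℕ
  /-- Galerkin truncation level -/
  n : ℕ
  hmn : m ≤ n
  /-- the forcing term, in `L²(AddCircle L)` -/
  f : AddCircle L → ℂ
  hf : MeasureTheory.MemLp f 2 MeasureTheory.volume
  /-- the initial time is `-k₀` -/
  k₀ : ℝ
  /-- the Fourier coefficients of the datum `v` -/
  vc : ℤ → ℝ → ℂ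
  hvc : ∀ k : ℤ, ContDiff ℝ 1 (vc k)
  /-- `|v|_X < ∞` -/
  hvX : ∃ C : ℝ, ∀ s : ℝ,
    l2norm L (trigSum L m (fun k => vc k s))
      + l2norm L (trigSum L m (fun k => deriv (vc k) s)) ≤ C
  /-- the coefficients of the Galerkin solution -/
  a : ℤ → ℝ → ℂ
  /-- the time derivatives of the coefficients -/
  a' : ℤ → ℝ → ℂ
  ha : ∀ (k : ℤ) (s : ℝ), -k₀ ≤ s → HasDerivWithinAt (a k) (a' k s) (Set.Ici (-k₀)) s
  hinit : ∀ k : ℤ, a k (-k₀) = 0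
  heq : ∀ (s : ℝ), -k₀ ≤ s → ∀ x : AddCircle L,
    Complex.I * trigSum L n (fun k => a' k s) x
      + trigSum L n (fun k => Complex.ofReal (-((2 * Real.pi * (k : ℝ) / L) ^ 2)) * a k s) x
      + lowProj L n (fun y => Complex.ofReal (‖trigSum L n (fun k => a k s) y‖ ^ 2)
          * trigSum L n (fun k => a k s) y) x
      + Complex.I * (γ : ℂ) * trigSum L n (fun k => a k s) x
      = lowProj L n f x
        - Complex.I * (μ : ℂ) * (lowProj L m (trigSum L n (fun k => a k s)) x
            - trigSum L m (fun k => vc k s) x)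

namespace GalerkinSolution

variable {L : ℝ} [Fact (0 < L)]

/-- the solution `w(s, ·)` -/
noncomputable def w (G : GalerkinSolution L) (s : ℝ) : AddCircle L → ℂ :=
  trigSum L G.n (fun k => G.a k s)

/-- the time derivative `∂ₛ w(s, ·)` -/
noncomputable def ws (G : GalerkinSolution L) (s : ℝ) : AddCircle L → ℂ :=
  trigSum L G.n (fun k => G.a' k s)

/-- the spatial derivative `∂ₓ w(s, ·)` -/
noncomputable def wx (G : GalerkinSolution L) (s : ℝ) : AddCircle L → ℂ :=
  trigSum L G.n (fun k => Complex.ofReal (2 * Real.pi * (k : ℝ) / L) * Complex.I * G.a k s)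

/-- the second spatial derivative `∂ₓ² w(s, ·)` -/
noncomputable def wxx (G : GalerkinSolution L) (s : ℝ) : AddCircle L → ℂ :=
  trigSum L G.n (fun k => Complex.ofReal (-((2 * Real.pi * (k : ℝ) / L) ^ 2)) * G.a k s)

/-- the datum `v(s)` -/
noncomputable def v (G : GalerkinSolution L) (s : ℝ) : AddCircle L → ℂ :=
  trigSum L G.m (fun k => G.vc k s)

/-- the time derivative `∂ₛ v(s)` of the datum -/
noncomputable def vs (G : GalerkinSolution L) (s : ℝ) : AddCircle L → ℂ :=
  trigSum L G.m (fun k => deriv (G.vc k) s)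

/-- the norm `|v|_X = sup_s ‖v(s)‖ + sup_s ‖∂ₛ v(s)‖` of the datum -/
noncomputable def normX (G : GalerkinSolution L) : ℝ :=
  (⨆ s : ℝ, l2norm L (G.v s)) + ⨆ s : ℝ, l2norm L (G.vs s)

end GalerkinSolution

/-! Pair the equation with `w(s)` in `L²`, i.e. multiply it by `conj w` and integrate. As `P_n`
is self-adjoint and fixes `w`, the nonlinear term contributes `‖w‖_{L⁴}⁴` and the forcing
`∫ f conj w`; integrating by parts, `∂ₓ² w` contributes `-‖∂ₓ w‖²`; the damping and the feedback
`μ ∫ (P_m w) conj w = μ ‖P_m w‖²` contribute `i` times real numbers. Since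
`Re (i ∫ ∂ₛw conj w) = Im ∫ w conj ∂ₛw`, the real part of the paired equation is the identity. -/

open scoped ComplexConjugate

section CompactSpace

variable {X : Type*} [TopologicalSpace X] [CompactSpace X] [MeasurableSpace X]
  [OpensMeasurableSpace X] {μ : Measure X}

lemma Continuous.integrable_of_compactSpace {E : Type*} [NormedAddCommGroup E] [IsFiniteMeasure μ]
    {g : X → E} (hg : Continuous g) : Integrable g μ :=
  hg.integrable_of_hasCompactSupport (.of_compactSpace g)

lemma integrable_mul_conj {g h : X → ℂ} (hg : Integrable g μ) (hh : Continuous h) :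
    Integrable (fun x => g x * conj (h x)) μ := by
  obtain ⟨C, hC⟩ := hh.bounded_above_of_compact_support (.of_compactSpace h)
  exact hg.mul_bdd (Complex.continuous_conj.comp hh).aestronglyMeasurable
    (.of_forall fun x => (RCLike.norm_conj (h x)).trans_le (hC x))

end CompactSpace

lemma continuous_trigSum {L : ℝ} (N : ℕ) (c : ℤ → ℂ) : Continuous (trigSum L N c) :=
  continuous_finsetSum _ fun k _ => continuous_const.mul (fourier k).continuous

section L2Inner

variable {L : ℝ} [hL : Fact (0 < L)]

noncomputable def l2inner (g h : AddCircle L → ℂ) : ℂ :=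
  ∫ x : AddCircle L, g x * conj (h x)

lemma l2inner_add {g₁ g₂ h : AddCircle L → ℂ} (hg₁ : Continuous g₁) (hg₂ : Continuous g₂)
    (hh : Continuous h) : l2inner (g₁ + g₂) h = l2inner g₁ h + l2inner g₂ h := by
  simp only [l2inner, Pi.add_apply, add_mul]
  exact integral_add (integrable_mul_conj hg₁.integrable_of_compactSpace hh)
    (integrable_mul_conj hg₂.integrable_of_compactSpace hh)

lemma l2inner_sub {g₁ g₂ h : AddCircle L → ℂ} (hg₁ : Continuous g₁) (hg₂ : Continuous g₂)
    (hh : Continuous h) : l2inner (g₁ - g₂) h = l2inner g₁ h - l2inner g₂ h := by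
  simp only [l2inner, Pi.sub_apply, sub_mul]
  exact integral_sub (integrable_mul_conj hg₁.integrable_of_compactSpace hh)
    (integrable_mul_conj hg₂.integrable_of_compactSpace hh)

lemma l2inner_smul (c : ℂ) (g h : AddCircle L → ℂ) : l2inner (c • g) h = c * l2inner g h := by
  simp only [l2inner, Pi.smul_apply, smul_eq_mul, mul_assoc]
  exact integral_const_mul c _

lemma l2inner_conj_symm (g h : AddCircle L → ℂ) : conj (l2inner g h) = l2inner h g := by
  simp only [l2inner, ← integral_conj, map_mul, Complex.conj_conj, mul_comm]

lemma l2inner_self (g : AddCircle L → ℂ) : l2inner g g = ((∫ x, ‖g x‖ ^ 2 : ℝ) : ℂ) := by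
  simp only [l2inner, Complex.mul_conj', ← Complex.ofReal_pow]
  exact integral_ofReal

lemma l2norm_sq (g : AddCircle L → ℂ) : l2norm L g ^ 2 = ∫ x, ‖g x‖ ^ 2 :=
  Real.sq_sqrt (integral_nonneg fun _ => sq_nonneg _)

lemma l2inner_norm_sq_mul_self (g : AddCircle L → ℂ) :
    l2inner (fun y => ((‖g y‖ ^ 2 : ℝ) : ℂ) * g y) g = ((∫ x, ‖g x‖ ^ 4 : ℝ) : ℂ) := by
  have hpointwise : ∀ x, ((‖g x‖ ^ 2 : ℝ) : ℂ) * g x * conj (g x) = ((‖g x‖ ^ 4 : ℝ) : ℂ) :=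
    fun x => by
      rw [mul_assoc, Complex.mul_conj']
      push_cast
      ring
  rw [l2inner, funext hpointwise]
  exact integral_ofReal

-- `volume` on `AddCircle L` has mass `L`, while `fourierCoeff` integrates against the Haar
-- probability measure.
lemma l2inner_fourier {g : AddCircle L → ℂ} (k : ℤ) :
    l2inner g (fourier k) = L * fourierCoeff g k := by
  have hconj : ∀ x : AddCircle L, g x * conj (fourier k x) = fourier (-k) x • g x := fun x => by
    rw [← fourier_neg, smul_eq_mul, mul_comm]
  rw [l2inner, funext hconj, fourierCoeff, AddCircle.volume_eq_smul_haarAddCircle,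
    integral_smul_measure, ENNReal.toReal_ofReal hL.out.le, Complex.real_smul]

lemma l2inner_trigSum {g : AddCircle L → ℂ} (hg : Integrable g) (N : ℕ) (b : ℤ → ℂ) :
    l2inner g (trigSum L N b) = L * ∑ k ∈ Icc (-(N : ℤ)) N, fourierCoeff g k * conj (b k) := by
  have hexpand : ∀ x, g x * conj (trigSum L N b x)
      = ∑ k ∈ Icc (-(N : ℤ)) N, conj (b k) * (g x * conj (fourier k x)) := fun x => by
    simp only [trigSum, map_sum, map_mul, mul_sum]
    exact sum_congr rfl fun k _ => by ring
  rw [l2inner, funext hexpand, integral_finsetSum _ fun k _ =>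
    (integrable_mul_conj hg (fourier k).continuous).const_mul _, mul_sum]
  refine sum_congr rfl fun k _ => ?_
  rw [integral_const_mul, ← l2inner, l2inner_fourier]
  ring

lemma fourierCoeff_trigSum (N : ℕ) (c : ℤ → ℂ) {k : ℤ} (hk : k ∈ Icc (-(N : ℤ)) N) :
    fourierCoeff (trigSum L N c) k = c k := by
  have hsum : trigSum L N c = ∑ l ∈ Icc (-(N : ℤ)) N, c l • ⇑(fourier l) := by
    ext x
    simp [trigSum, Finset.sum_apply]
  rw [hsum, fourierCoeff.sum _ _ fun l _ =>
    ((fourier l).continuous.const_smul (c l)).integrable_of_compactSpace]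
  simp [fourierCoeff.const_smul, fourierCoeff_fourier, Pi.single_apply, hk]

lemma l2inner_trigSum_trigSum (N : ℕ) (c b : ℤ → ℂ) :
    l2inner (trigSum L N c) (trigSum L N b) = L * ∑ k ∈ Icc (-(N : ℤ)) N, c k * conj (b k) := by
  rw [l2inner_trigSum (continuous_trigSum N c).integrable_of_compactSpace]
  exact congrArg _ (sum_congr rfl fun k hk => by rw [fourierCoeff_trigSum N c hk])

lemma l2inner_lowProj_trigSum {g : AddCircle L → ℂ} (hg : Integrable g) (N : ℕ) (b : ℤ → ℂ) :
    l2inner (lowProj L N g) (trigSum L N b) = l2inner g (trigSum L N b) := by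
  rw [lowProj, l2inner_trigSum_trigSum, l2inner_trigSum hg]

lemma l2inner_lowProj_self {g : AddCircle L → ℂ} (hg : Integrable g) (N : ℕ) :
    l2inner (lowProj L N g) g
      = ((L * ∑ k ∈ Icc (-(N : ℤ)) N, ‖fourierCoeff g k‖ ^ 2 : ℝ) : ℂ) := by
  rw [← l2inner_conj_symm, lowProj, l2inner_trigSum hg]
  simp only [Complex.mul_conj', map_mul, Complex.conj_ofReal, map_sum, map_pow]
  push_cast
  rfl

namespace GalerkinSolution

variable (G : GalerkinSolution L) (s : ℝ)

lemma l2inner_wxx_w : l2inner (G.wxx s) (G.w s) = -l2inner (G.wx s) (G.wx s) := by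
  rw [wxx, w, wx, l2inner_trigSum_trigSum, l2inner_trigSum_trigSum, ← mul_neg,
    ← sum_neg_distrib]
  refine congrArg _ (sum_congr rfl fun k _ => ?_)
  simp only [map_mul, Complex.conj_ofReal, Complex.conj_I, Complex.ofReal_neg,
    Complex.ofReal_pow]
  linear_combination
    -(((2 * Real.pi * k / L : ℝ) : ℂ) ^ 2 * G.a k s * conj (G.a k s)) * Complex.I_sq

lemma l2inner_lowProj_w {g : AddCircle L → ℂ} (hg : Integrable g) :
    l2inner (lowProj L G.n g) (G.w s) = l2inner g (G.w s) :=
  l2inner_lowProj_trigSum hg _ _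

end GalerkinSolution

end L2Inner

/-- for a Galerkin solution `w` and every `s ≥ -k₀`,
`Im ∫ w(s) conj(∂ₛ w(s)) = ‖∂ₓ w(s)‖² - ‖w(s)‖_{L⁴}⁴ + Re ∫ f conj(w(s))
  - μ Im ∫ v(s) conj(w(s))`. -/
theorem galerkin_real_part_identity (L : ℝ) [Fact (0 < L)] (G : GalerkinSolution L)
    (s : ℝ) (hs : -G.k₀ ≤ s) :
    (∫ x : AddCircle L, G.w s x * (starRingEnd ℂ) (G.ws s x)).im
      = (l2norm L (G.wx s)) ^ 2 - (∫ x : AddCircle L, ‖G.w s x‖ ^ 4)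
        + (∫ x : AddCircle L, G.f x * (starRingEnd ℂ) (G.w s x)).re
        - G.μ * (∫ x : AddCircle L, G.v s x * (starRingEnd ℂ) (G.w s x)).im := by
  change (l2inner (G.w s) (G.ws s)).im = _ - _ + (l2inner G.f (G.w s)).re
    - G.μ * (l2inner (G.v s) (G.w s)).im
  set w := G.w s
  have hw : Continuous w := continuous_trigSum _ _
  have hcubic : Continuous fun y => ((‖w y‖ ^ 2 : ℝ) : ℂ) * w y := by fun_prop
  have hpaired := congrArg (l2inner · w) (show
    Complex.I • G.ws s + G.wxx s + lowProj L G.n (fun y => ((‖w y‖ ^ 2 : ℝ) : ℂ) * w y)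
        + (Complex.I * G.γ) • w
      = lowProj L G.n G.f - (Complex.I * G.μ) • (lowProj L G.m w - G.v s) from
    funext fun x => by
      simp only [Pi.add_apply, Pi.sub_apply, Pi.smul_apply, smul_eq_mul]
      exact G.heq s hs x)
  rw [l2inner_add (hh := hw), l2inner_add (hh := hw), l2inner_add (hh := hw),
    l2inner_sub (hh := hw), l2inner_smul, l2inner_smul, l2inner_smul, l2inner_sub (hh := hw),
    G.l2inner_wxx_w, G.l2inner_lowProj_w s hcubic.integrable_of_compactSpace,
    l2inner_norm_sq_mul_self, G.l2inner_lowProj_w s (G.hf.integrable one_le_two),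
    l2inner_lowProj_self hw.integrable_of_compactSpace, l2inner_self, l2inner_self] at hpaired
  · rw [← l2inner_conj_symm, l2norm_sq]
    have hre := congrArg Complex.re hpaired
    simp only [Complex.add_re, Complex.sub_re, Complex.mul_re, Complex.neg_re, Complex.I_re,
      Complex.I_im, Complex.ofReal_re, Complex.ofReal_im, Complex.mul_im, Complex.sub_im,
      Complex.conj_im] at hre ⊢
    linarith
  all_goals repeat' apply_rules [Continuous.add, Continuous.sub, Continuous.const_smul,
    continuous_trigSum]
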